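/- Embedding of the space L^{(q,p,η)}_{r,φ_1,δ} into Campanato spaces: let 0<q≤1, q≤p<∞, 0<η<∞ and 1≤r<∞. For every g ∈ L^{(q,p,η)}_{r,φ_1,δ}, one has ‖g‖_{L_{r,φ_2,δ}} ≤ ‖g‖_{L_{r,φ_1,δ}} ≤ ‖g‖_{L^{(q,p,η)}_{r,φ_1,δ}}. -/

import Mathlib

open MeasureTheory ENNReal Set
open scoped Classical

noncomputable section

namespace HA

/-- `ℝ^d` with the Euclidean metric. -/
abbrev Ed (d : ℕ) : Type := EuclideanSpace ℝ (Fin d)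

/-- The unit cube `k + [0,1)^d`. -/
def unitCube (d : ℕ) (k : Fin d → ℤ) : Set (Ed d) :=
  {x | ∀ i, (k i : ℝ) ≤ x i ∧ x i < (k i : ℝ) + 1}

/-- Closed axis-parallel cube with center `c` and side-length `ℓ`. -/
def cube (d : ℕ) (c : Ed d) (ℓ : ℝ) : Set (Ed d) :=
  {x | ∀ i, |x i - c i| ≤ ℓ / 2}

/-- Open axis-parallel cube with center `c` and side-length `ℓ`. -/
def openCube (d : ℕ) (c : Ed d) (ℓ : ℝ) : Set (Ed d) :=
  {x | ∀ i, |x i - c i| < ℓ / 2}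

/-- The Wiener amalgam quasi-norm `‖F‖_{q,p}` of an `ℝ≥0∞`-valued function:
`(∑_{k ∈ ℤ^d} (∫_{Q_k} F^q)^{p/q})^{1/p}`. -/
def eAmalgam (d : ℕ) (q p : ℝ) (F : Ed d → ℝ≥0∞) : ℝ≥0∞ :=
  (∑' k : Fin d → ℤ, ((∫⁻ x in unitCube d k, F x ^ q) ^ (1 / q)) ^ p) ^ (1 / p)

/-- The Wiener amalgam quasi-norm `‖f‖_{q,p}` of a complex-valued function. -/
def amalgamNorm (d : ℕ) (q p : ℝ) (f : Ed d → ℂ) : ℝ≥0∞ :=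
  eAmalgam d q p fun x => (‖f x‖₊ : ℝ≥0∞)

/-- The Hardy–Littlewood maximal function `𝔐 f`. -/
def maximalFn (d : ℕ) (f : Ed d → ℂ) (x : Ed d) : ℝ≥0∞ :=
  ⨆ (r : ℝ) (_ : 0 < r),
    (volume (Metric.ball x r))⁻¹ * ∫⁻ y in Metric.ball x r, (‖f y‖₊ : ℝ≥0∞)

/-- The `ℓ^u` norm of a sequence in `ℝ≥0∞`; for `u = ∞` it is the supremum. -/
def ellU (u : ℝ≥0∞) (F : ℕ → ℝ≥0∞) : ℝ≥0∞ :=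
  if u = ∞ then ⨆ n, F n else (∑' n, F n ^ u.toReal) ^ (1 / u.toReal)

/-- Polynomial functions on `ℝ^d` (complex valued) of degree at most `δ`. -/
def polySpace (d δ : ℕ) : Set (Ed d → ℂ) :=
  {g | ∃ P : MvPolynomial (Fin d) ℂ, P.totalDegree ≤ δ ∧
        ∀ x : Ed d, g x = MvPolynomial.eval (fun i => (x i : ℂ)) P}

/-- `P` is a polynomial of degree at most `δ` with `∫_Q (f - P) 𝔮 = 0`
for every polynomial `𝔮` of degree at most `δ`. -/
def projCond (d δ : ℕ) (Q : Set (Ed d)) (f P : Ed d → ℂ) : Prop :=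
  P ∈ polySpace d δ ∧ ∀ 𝔮 ∈ polySpace d δ, ∫ x in Q, (f x - P x) * 𝔮 x = 0

/-- The polynomial projection `P_Q^δ(f)` (defaulting to `0` when it does not exist). -/
def polyProj (d δ : ℕ) (Q : Set (Ed d)) (f : Ed d → ℂ) : Ed d → ℂ :=
  if h : ∃ P, projCond d δ Q f P then h.choose else 0

/-- Membership in `L^r_loc(ℝ^d)`. -/
def memLocLr (d : ℕ) (r : ℝ) (f : Ed d → ℂ) : Prop :=
  AEStronglyMeasurable f volume ∧
    ∀ (c : Ed d) (ℓ : ℝ), 0 < ℓ → (∫⁻ x in cube d c ℓ, (‖f x‖₊ : ℝ≥0∞) ^ r) ≠ ∞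

/-- A countable family of (nondegenerate) cubes contained in `Ω` with overlap at most `K`. -/
structure CubeFamily (d : ℕ) (K : ℝ) (Ω : Set (Ed d)) where
  center : ℕ → Ed d
  side : ℕ → ℝ
  side_pos : ∀ n, 0 < side n
  cube_subset : ∀ n, cube d (center n) (side n) ⊆ Ω
  overlap : ∀ x, (∑' n, (cube d (center n) (side n)).indicator (fun _ => (1 : ℝ≥0∞)) x)
      ≤ ENNReal.ofReal K

/-- `|Q|^{1/r'} (∫_Q |g - P_Q^δ(g)|^r)^{1/r}` (note `1/r' = 1 - 1/r`). -/
def oscTerm (d δ : ℕ) (r : ℝ) (g : Ed d → ℂ) (Q : Set (Ed d)) : ℝ≥0∞ :=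
  volume Q ^ (1 - 1 / r) * (∫⁻ x in Q, (‖g x - polyProj d δ Q g x‖₊ : ℝ≥0∞) ^ r) ^ (1 / r)

/-- `|Q|^{1/r'} (∫_Q |g|^r)^{1/r}`. -/
def intTerm (d : ℕ) (r : ℝ) (g : Ed d → ℂ) (Q : Set (Ed d)) : ℝ≥0∞ :=
  volume Q ^ (1 - 1 / r) * (∫⁻ x in Q, (‖g x‖₊ : ℝ≥0∞) ^ r) ^ (1 / r)

/-- `inf_{𝔭 ∈ 𝒫_δ} |Q|^{1/r'} (∫_Q |g - 𝔭|^r)^{1/r}`. -/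
def bestTerm (d δ : ℕ) (r : ℝ) (g : Ed d → ℂ) (Q : Set (Ed d)) : ℝ≥0∞ :=
  ⨅ P ∈ polySpace d δ,
    volume Q ^ (1 - 1 / r) * (∫⁻ x in Q, (‖g x - P x‖₊ : ℝ≥0∞) ^ r) ^ (1 / r)

/-- The functional `O(g, Ω, r)`. -/
def Ofun (d δ : ℕ) (K C0 r : ℝ) (g : Ed d → ℂ) (Ω : Set (Ed d)) : ℝ≥0∞ :=
  ⨆ F : CubeFamily d K Ω, ∑' n, oscTerm d δ r g (cube d (F.center n) (C0 * F.side n))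

/-- The functional `Õ(g, Ω, r)`. -/
def Otilde (d δ : ℕ) (K C0 r : ℝ) (g : Ed d → ℂ) (Ω : Set (Ed d)) : ℝ≥0∞ :=
  ⨆ F : CubeFamily d K Ω, ∑' n, bestTerm d δ r g (cube d (F.center n) (C0 * F.side n))

/-- The local functional `O(g, Ω, r)^{loc}`. -/
def OfunLoc (d δ : ℕ) (K C0 r : ℝ) (g : Ed d → ℂ) (Ω : Set (Ed d)) : ℝ≥0∞ :=
  ⨆ F : CubeFamily d K Ω, ∑' n,
    if volume (cube d (F.center n) (C0 * F.side n)) < 1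
    then oscTerm d δ r g (cube d (F.center n) (C0 * F.side n))
    else intTerm d r g (cube d (F.center n) (C0 * F.side n))

/-- `φ₁(Q) = ‖χ_Q‖_{q,p} / |Q|`. -/
def φ1 (d : ℕ) (q p : ℝ) (c : Ed d) (ℓ : ℝ) : ℝ≥0∞ :=
  eAmalgam d q p ((cube d c ℓ).indicator fun _ => (1 : ℝ≥0∞)) * (volume (cube d c ℓ))⁻¹

/-- `φ₂(Q) = ‖χ_Q‖_{L^q} / |Q| = |Q|^{1/q} / |Q|`. -/
def φ2 (d : ℕ) (q : ℝ) (c : Ed d) (ℓ : ℝ) : ℝ≥0∞ :=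
  volume (cube d c ℓ) ^ (1 / q) * (volume (cube d c ℓ))⁻¹

/-- The Campanato norm `‖f‖_{𝓛_{r,φ,δ}}`. -/
def campanato (d δ : ℕ) (r : ℝ) (φ : Ed d → ℝ → ℝ≥0∞) (f : Ed d → ℂ) : ℝ≥0∞ :=
  ⨆ (c : Ed d) (ℓ : ℝ) (_ : 0 < ℓ),
    (φ c ℓ)⁻¹ * ((volume (cube d c ℓ))⁻¹ *
      ∫⁻ x in cube d c ℓ, (‖f x - polyProj d δ (cube d c ℓ) f x‖₊ : ℝ≥0∞) ^ r) ^ (1 / r)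

/-- The local Campanato norm `‖f‖_{𝓛^{loc}_{r,φ,δ}}`. -/
def campanatoLoc (d δ : ℕ) (r : ℝ) (φ : Ed d → ℝ → ℝ≥0∞) (f : Ed d → ℂ) : ℝ≥0∞ :=
  (⨆ (c : Ed d) (ℓ : ℝ) (_ : 0 < ℓ) (_ : 1 ≤ volume (cube d c ℓ)),
    (φ c ℓ)⁻¹ * ((volume (cube d c ℓ))⁻¹ *
      ∫⁻ x in cube d c ℓ, (‖f x‖₊ : ℝ≥0∞) ^ r) ^ (1 / r)) +
  (⨆ (c : Ed d) (ℓ : ℝ) (_ : 0 < ℓ) (_ : volume (cube d c ℓ) < 1),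
    (φ c ℓ)⁻¹ * ((volume (cube d c ℓ))⁻¹ *
      ∫⁻ x in cube d c ℓ, (‖f x - polyProj d δ (cube d c ℓ) f x‖₊ : ℝ≥0∞) ^ r) ^ (1 / r))

/-- `‖∑_{j ∈ ℤ} 2^{jη} χ_{Ω^j}‖_{q/η, p/η}`. -/
def layerNorm (d : ℕ) (q p η : ℝ) (Ω : ℤ → Set (Ed d)) : ℝ≥0∞ :=
  eAmalgam d (q / η) (p / η) fun x =>
    ∑' j : ℤ, (Ω j).indicator (fun _ => (2 : ℝ≥0∞) ^ ((j : ℝ) * η)) x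

/-- The set of admissible constants in the defining inequality of `𝓛^{(q,p,η)}_{r,φ₁,δ}`. -/
def ONormSet (d δ : ℕ) (K C0 q p η r : ℝ) (g : Ed d → ℂ) : Set ℝ≥0∞ :=
  {C | ∀ Ω : ℤ → Set (Ed d), (∀ j, IsOpen (Ω j)) → (∀ j, Ω j ≠ univ) →
    layerNorm d q p η Ω ≠ ∞ →
    (∑' j : ℤ, (2 : ℝ≥0∞) ^ (j : ℝ) * Ofun d δ K C0 r g (Ω j)) ≤
      C * layerNorm d q p η Ω ^ (1 / η)}

/-- The variant of `ONormSet` defined through the functional `Õ`. -/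
def OtildeNormSet (d δ : ℕ) (K C0 q p η r : ℝ) (g : Ed d → ℂ) : Set ℝ≥0∞ :=
  {C | ∀ Ω : ℤ → Set (Ed d), (∀ j, IsOpen (Ω j)) → (∀ j, Ω j ≠ univ) →
    layerNorm d q p η Ω ≠ ∞ →
    (∑' j : ℤ, (2 : ℝ≥0∞) ^ (j : ℝ) * Otilde d δ K C0 r g (Ω j)) ≤
      C * layerNorm d q p η Ω ^ (1 / η)}

/-- The set of admissible constants in the defining inequality of `𝓛^{(q,p,η)loc}_{r,φ₁,δ}`. -/
def ONormSetLoc (d δ : ℕ) (K C0 q p η r : ℝ) (g : Ed d → ℂ) : Set ℝ≥0∞ :=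
  {C | ∀ Ω : ℤ → Set (Ed d), (∀ j, IsOpen (Ω j)) → (∀ j, Ω j ≠ univ) →
    layerNorm d q p η Ω ≠ ∞ →
    (∑' j : ℤ, (2 : ℝ≥0∞) ^ (j : ℝ) * OfunLoc d δ K C0 r g (Ω j)) ≤
      C * layerNorm d q p η Ω ^ (1 / η)}

/-- A `(q,r,s)`-atom with associated cube `Q`. -/
def IsHAtom (d : ℕ) (q : ℝ) (r : ℝ≥0∞) (s : ℕ) (a : Ed d → ℂ) (Q : Set (Ed d)) : Prop :=
  (∀ x ∉ Q, a x = 0) ∧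
  eLpNorm a r volume ≤ volume Q ^ (1 / r.toReal - 1 / q) ∧
  (∀ β : Fin d → ℕ, (∑ i, β i) ≤ s → ∫ x, (∏ i, (x i : ℂ) ^ β i) * a x = 0)

/-- A local `(q,r,s)`-atom with associated cube `Q`: vanishing moments are required
only when `|Q| < 1`. -/
def IsLocalHAtom (d : ℕ) (q : ℝ) (r : ℝ≥0∞) (s : ℕ) (a : Ed d → ℂ) (Q : Set (Ed d)) : Prop :=
  (∀ x ∉ Q, a x = 0) ∧
  eLpNorm a r volume ≤ volume Q ^ (1 / r.toReal - 1 / q) ∧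
  (volume Q < 1 → ∀ β : Fin d → ℕ, (∑ i, β i) ≤ s → ∫ x, (∏ i, (x i : ℂ) ^ β i) * a x = 0)


end HA

/-!
For `q ≤ p` the `ℓ^{p/q}` norm is dominated by the `ℓ¹` norm, so `‖χ_Q‖_{q,p} ≤ |Q|^{1/q}`,
i.e. `φ₁ ≤ φ₂`; this gives the first inequality. For the second, fix a cube `Q` and test the
defining inequality of `𝓛^{(q,p,η)}_{r,φ₁,δ}` on the single layer `Ω⁰ = int Q`. The cube
`C₀⁻¹Q`, together with infinitely many pairwise disjoint small cubes packed into `Ω⁰ ∖ C₀⁻¹Q`,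
is an admissible family, so `O(g, Ω⁰, r) ≥ |Q|^{1/r'} (∫_Q |g - P_Q^δ g|^r)^{1/r}`, while the
right-hand side is `C ‖χ_{Ω⁰}‖_{q,p} ≤ C ‖χ_Q‖_{q,p} = C |Q| φ₁(Q)`. In dimension zero there
is no nonempty proper open set, but every function is then a polynomial, so the Campanato
norm vanishes.
-/

namespace ENNReal

lemma rpow_sub_one_mul_self {x : ℝ≥0∞} (hx0 : x ≠ 0) (hx : x ≠ ∞) (e : ℝ) :
    x ^ (e - 1) * x = x ^ e := by
  calc x ^ (e - 1) * x = x ^ (e - 1) * x ^ (1 : ℝ) := by rw [rpow_one]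
    _ = x ^ e := by rw [← rpow_add _ _ hx0 hx, sub_add_cancel]

lemma tsum_rpow_le_rpow_tsum {ι : Type*} (a : ι → ℝ≥0∞) {e : ℝ} (he : 1 ≤ e) :
    ∑' i, a i ^ e ≤ (∑' i, a i) ^ e := by
  set A := ∑' i, a i
  rcases eq_or_ne A ∞ with hA | hA
  · rw [hA, top_rpow_of_pos (by linarith)]
    exact le_top
  have key (i : ι) : a i ^ e ≤ A ^ (e - 1) * a i := by
    rcases eq_or_ne (a i) 0 with hai | hai
    · simp [hai, zero_rpow_of_pos (by linarith : (0 : ℝ) < e)]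
    have haiA : a i ≤ A := ENNReal.le_tsum i
    calc a i ^ e = a i ^ (e - 1) * a i :=
          (rpow_sub_one_mul_self hai (ne_top_of_le_ne_top hA haiA) e).symm
      _ ≤ A ^ (e - 1) * a i := by gcongr
  calc ∑' i, a i ^ e ≤ ∑' i, A ^ (e - 1) * a i := ENNReal.tsum_le_tsum key
    _ = A ^ (e - 1) * A := ENNReal.tsum_mul_left
    _ ≤ A ^ e := by
        rcases eq_or_ne A 0 with hA0 | hA0
        · simp [hA0]
        · exact (rpow_sub_one_mul_self hA0 hA e).le

end ENNReal

namespace HA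

section Development

variable {d : ℕ}

section Cubes

lemma cube_eq_preimage_pi (c : Ed d) (ℓ : ℝ) :
    cube d c ℓ = WithLp.ofLp ⁻¹' univ.pi fun i => Metric.closedBall (c i) (ℓ / 2) := by
  ext x
  simp [cube, Real.dist_eq]

lemma openCube_eq_preimage_pi (c : Ed d) (ℓ : ℝ) :
    openCube d c ℓ = WithLp.ofLp ⁻¹' univ.pi fun i => Metric.ball (c i) (ℓ / 2) := by
  ext x
  simp [openCube, Real.dist_eq]

lemma mem_unitCube_iff {k : Fin d → ℤ} {x : Ed d} : x ∈ unitCube d k ↔ ∀ i, ⌊x i⌋ = k i := by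
  simp [unitCube, Int.floor_eq_iff]

lemma measurableSet_cube (c : Ed d) (ℓ : ℝ) : MeasurableSet (cube d c ℓ) := by
  rw [cube_eq_preimage_pi]
  exact (MeasurableSet.univ_pi fun _ => measurableSet_closedBall).preimage (by fun_prop)

lemma measurableSet_unitCube (k : Fin d → ℤ) : MeasurableSet (unitCube d k) := by
  have : unitCube d k = WithLp.ofLp ⁻¹' univ.pi fun i => Ico (k i : ℝ) (k i + 1) := by
    ext x
    simp [unitCube]
  rw [this]
  exact (MeasurableSet.univ_pi fun _ => measurableSet_Ico).preimage (by fun_prop)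

lemma isOpen_openCube (c : Ed d) (ℓ : ℝ) : IsOpen (openCube d c ℓ) := by
  rw [openCube_eq_preimage_pi]
  exact (isOpen_set_pi finite_univ fun _ _ => Metric.isOpen_ball).preimage
    (PiLp.continuous_ofLp 2 _)

lemma openCube_subset_cube (c : Ed d) (ℓ : ℝ) : openCube d c ℓ ⊆ cube d c ℓ :=
  fun _ hx i => (hx i).le

lemma volume_cube (c : Ed d) (ℓ : ℝ) : volume (cube d c ℓ) = ENNReal.ofReal ℓ ^ d := by
  rw [cube_eq_preimage_pi, (PiLp.volume_preserving_ofLp (Fin d)).measure_preimage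
    (MeasurableSet.univ_pi fun _ => measurableSet_closedBall).nullMeasurableSet,
    volume_pi_pi]
  simp_rw [Real.volume_closedBall, mul_div_cancel₀ ℓ two_ne_zero]
  simp

lemma volume_cube_pos (c : Ed d) {ℓ : ℝ} (hℓ : 0 < ℓ) : 0 < volume (cube d c ℓ) := by
  rw [volume_cube]
  exact ENNReal.pow_pos (ENNReal.ofReal_pos.mpr hℓ) d

lemma volume_cube_ne_top (c : Ed d) (ℓ : ℝ) : volume (cube d c ℓ) ≠ ∞ := by
  rw [volume_cube]
  exact ENNReal.pow_ne_top ENNReal.ofReal_ne_top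

lemma iUnion_unitCube : ⋃ k, unitCube d k = univ :=
  iUnion_eq_univ_iff.mpr fun x => ⟨fun i => ⌊x i⌋, mem_unitCube_iff.mpr fun _ => rfl⟩

lemma pairwise_disjoint_unitCube : Pairwise (Function.onFun Disjoint (unitCube d)) := by
  refine fun k k' hkk' => disjoint_left.mpr fun x hx hx' => hkk' (funext fun i => ?_)
  rw [← mem_unitCube_iff.mp hx i, ← mem_unitCube_iff.mp hx' i]

lemma tsum_volume_inter_unitCube {S : Set (Ed d)} (hS : MeasurableSet S) :
    ∑' k, volume (S ∩ unitCube d k) = volume S := by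
  rw [← measure_iUnion (pairwise_disjoint_unitCube.mono fun _ _ h =>
      h.mono inter_subset_right inter_subset_right) fun k => hS.inter (measurableSet_unitCube k),
    ← inter_iUnion, iUnion_unitCube, inter_univ]

lemma openCube_ne_univ [NeZero d] (c : Ed d) (ℓ : ℝ) : openCube d c ℓ ≠ univ := by
  intro h
  have hx := (h ▸ mem_univ (c + EuclideanSpace.single 0 (ℓ / 2)) : _ ∈ openCube d c ℓ) 0
  simp only [PiLp.add_apply, PiLp.single_apply, if_true, add_sub_cancel_left] at hx
  exact (le_abs_self _).not_gt hx

end Cubes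

section Amalgam

lemma eAmalgam_indicator {s : ℝ} (t : ℝ) (hs : 0 < s) {S : Set (Ed d)} (hS : MeasurableSet S) :
    eAmalgam d s t (S.indicator fun _ => 1) =
      (∑' k, volume (S ∩ unitCube d k) ^ (t / s)) ^ (1 / t) := by
  have hpow (x : Ed d) : S.indicator (fun _ => (1 : ℝ≥0∞)) x ^ s = S.indicator 1 x := by
    by_cases hx : x ∈ S <;> simp [hx, ENNReal.zero_rpow_of_pos hs]
  simp_rw [eAmalgam, hpow, lintegral_indicator_one hS, Measure.restrict_apply hS,
    ← ENNReal.rpow_mul, one_div_mul_eq_div]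

lemma eAmalgam_indicator_le {q p : ℝ} (hq : 0 < q) (hqp : q ≤ p) {S : Set (Ed d)}
    (hS : MeasurableSet S) :
    eAmalgam d q p (S.indicator fun _ => 1) ≤ volume S ^ (1 / q) := by
  have hp : 0 < p := hq.trans_le hqp
  rw [eAmalgam_indicator p hq hS, ← tsum_volume_inter_unitCube hS]
  calc (∑' k, volume (S ∩ unitCube d k) ^ (p / q)) ^ (1 / p)
      ≤ ((∑' k, volume (S ∩ unitCube d k)) ^ (p / q)) ^ (1 / p) := by
        gcongr
        exact ENNReal.tsum_rpow_le_rpow_tsum _ ((one_le_div hq).mpr hqp)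
    _ = (∑' k, volume (S ∩ unitCube d k)) ^ (1 / q) := by
        rw [← ENNReal.rpow_mul]
        field_simp

lemma eAmalgam_indicator_mono {q p : ℝ} (hq : 0 < q) (hp : 0 < p) {S T : Set (Ed d)}
    (hS : MeasurableSet S) (hT : MeasurableSet T) (hST : S ⊆ T) :
    eAmalgam d q p (S.indicator fun _ => 1) ≤ eAmalgam d q p (T.indicator fun _ => 1) := by
  rw [eAmalgam_indicator p hq hS, eAmalgam_indicator p hq hT]
  gcongr

lemma eAmalgam_indicator_ne_top {q p : ℝ} (hq : 0 < q) (hqp : q ≤ p) {S : Set (Ed d)}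
    (hS : MeasurableSet S) (hvol : volume S ≠ ∞) :
    eAmalgam d q p (S.indicator fun _ => 1) ≠ ∞ :=
  ne_top_of_le_ne_top (ENNReal.rpow_ne_top_of_nonneg (by positivity) hvol)
    (eAmalgam_indicator_le hq hqp hS)

lemma eAmalgam_indicator_ne_zero {q p : ℝ} (hq : 0 < q) (hp : 0 < p) {S : Set (Ed d)}
    (hS : MeasurableSet S) (hvol : volume S ≠ 0) :
    eAmalgam d q p (S.indicator fun _ => 1) ≠ 0 := by
  rw [eAmalgam_indicator p hq hS]
  intro h
  have hpq : 0 < p / q := by positivity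
  simp only [ENNReal.rpow_eq_zero_iff, ENNReal.tsum_eq_zero, hpq, not_lt_of_gt hpq, and_true,
    and_false, or_false, one_div, inv_pos, hp, inv_lt_zero, not_lt_of_gt hp] at h
  exact hvol (by simp [← tsum_volume_inter_unitCube hS, h])

lemma eAmalgam_div_rpow_inv {q p η : ℝ} (hq : 0 < q) (hη : 0 < η) {S : Set (Ed d)}
    (hS : MeasurableSet S) :
    eAmalgam d (q / η) (p / η) (S.indicator fun _ => 1) ^ (1 / η) =
      eAmalgam d q p (S.indicator fun _ => 1) := by
  rw [eAmalgam_indicator _ (by positivity) hS, eAmalgam_indicator p hq hS, ← ENNReal.rpow_mul,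
    div_div_div_cancel_right₀ hη.ne']
  congr 1
  field_simp

end Amalgam

lemma φ1_le_φ2 {q p : ℝ} (hq : 0 < q) (hqp : q ≤ p) (c : Ed d) (ℓ : ℝ) :
    φ1 d q p c ℓ ≤ φ2 d q c ℓ := by
  unfold φ1 φ2
  gcongr
  exact eAmalgam_indicator_le hq hqp (measurableSet_cube c ℓ)

lemma campanato_φ2_le_campanato_φ1 (δ : ℕ) {q p : ℝ} (r : ℝ) (hq : 0 < q) (hqp : q ≤ p)
    (g : Ed d → ℂ) : campanato d δ r (φ2 d q) g ≤ campanato d δ r (φ1 d q p) g := by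
  unfold campanato
  gcongr with c ℓ
  exact φ1_le_φ2 hq hqp c ℓ

section DimensionZero

lemma mem_polySpace_of_dim_zero (δ : ℕ) (f : Ed 0 → ℂ) : f ∈ polySpace 0 δ :=
  ⟨MvPolynomial.C (f 0), by simp, fun x => by simp [Subsingleton.elim x 0]⟩

lemma polyProj_univ_of_dim_zero (δ : ℕ) (f : Ed 0 → ℂ) : polyProj 0 δ univ f = f := by
  have hex : ∃ P, projCond 0 δ univ f P := ⟨f, mem_polySpace_of_dim_zero δ f, fun _ _ => by simp⟩
  set P := polyProj 0 δ univ f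
  have hP : projCond 0 δ univ f P := by
    simp only [P, polyProj, dif_pos hex]
    exact hex.choose_spec
  -- test the orthogonality against the conjugate of `f - P` itself
  have h := hP.2 (fun x => starRingEnd ℂ (f x - P x)) (mem_polySpace_of_dim_zero δ _)
  rw [Measure.restrict_univ, volume_euclideanSpace_eq_dirac, integral_dirac,
    Complex.mul_conj, Complex.ofReal_eq_zero, Complex.normSq_eq_zero, sub_eq_zero] at h
  funext x
  rw [Subsingleton.elim x 0, h]

lemma campanato_of_dim_zero (δ : ℕ) {r : ℝ} (hr : 0 < r) (φ : Ed 0 → ℝ → ℝ≥0∞)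
    (g : Ed 0 → ℂ) : campanato 0 δ r φ g = 0 := by
  have hcube (c : Ed 0) (ℓ : ℝ) : cube 0 c ℓ = univ := eq_univ_of_forall fun _ i => i.elim0
  simp [campanato, hcube, polyProj_univ_of_dim_zero, hr]

end DimensionZero

section CubeFamilies

lemma cube_subset_openCube {c c' : Ed d} {s ℓ : ℝ} (h : ∀ i, |c' i - c i| + s / 2 < ℓ / 2) :
    cube d c' s ⊆ openCube d c ℓ := fun x hx i =>
  calc |x i - c i| ≤ |x i - c' i| + |c' i - c i| := abs_sub_le _ _ _
    _ < ℓ / 2 := by linarith [hx i, h i]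

lemma disjoint_cube_of_lt_abs_sub {c c' : Ed d} {s s' : ℝ} (i : Fin d)
    (h : s / 2 + s' / 2 < |c i - c' i|) : Disjoint (cube d c s) (cube d c' s') :=
  disjoint_left.mpr fun x hx hx' => by
    linarith [hx i, hx' i, abs_sub_le (c i) (x i) (c' i), abs_sub_comm (c i) (x i)]

lemma exists_separated_intervals {s₀ ℓ : ℝ} (hs₀ : 0 < s₀) (hs₀ℓ : s₀ < ℓ) :
    ∃ t s : ℕ → ℝ, t 0 = 0 ∧ s 0 = s₀ ∧ (∀ n, 0 < s n) ∧ (∀ n, |t n| + s n / 2 < ℓ / 2) ∧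
      Pairwise fun m n => s m / 2 + s n / 2 < |t m - t n| := by
  have hL : 0 < ℓ / 2 - s₀ / 2 := by linarith
  set L := ℓ / 2 - s₀ / 2 with hL_def
  set w : ℕ → ℝ := fun n => L / 4 * 2⁻¹ ^ n
  have hw_pos (n : ℕ) : 0 < w n := by positivity
  have hw_le {n : ℕ} (hn : n ≠ 0) : w n ≤ L / 8 := by
    have : (2⁻¹ : ℝ) ^ n ≤ 2⁻¹ ^ 1 := pow_le_pow_of_le_one (by norm_num) (by norm_num) (by omega)
    simp only [w]
    nlinarith
  have hw_anti {m n : ℕ} (hmn : m < n) : w n ≤ w m / 2 := by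
    have : (2⁻¹ : ℝ) ^ n ≤ 2⁻¹ ^ (m + 1) := pow_le_pow_of_le_one (by norm_num) (by norm_num) hmn
    simp only [w, pow_succ] at this ⊢
    nlinarith
  -- for `n ≠ 0` the `n`-th interval `[s₀/2 + 5 w n / 2, s₀/2 + 7 w n / 2]` lies in the dyadic
  -- shell `(s₀/2 + 2 w n, s₀/2 + 4 w n)`, and these shells are disjoint
  let t : ℕ → ℝ := fun n => if n = 0 then 0 else s₀ / 2 + 3 * w n
  let s : ℕ → ℝ := fun n => if n = 0 then s₀ else w n
  have hsep {m n : ℕ} (hmn : m < n) : s m / 2 + s n / 2 < |t m - t n| := by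
    simp only [t, s, if_neg (by omega : n ≠ 0)]
    split_ifs with hm
    · rw [zero_sub, abs_neg, abs_of_pos (by linarith [hw_pos n])]
      linarith [hw_pos n]
    · rw [abs_of_nonneg (by linarith [hw_anti hmn, hw_pos n])]
      linarith [hw_anti hmn, hw_pos m]
  refine ⟨t, s, by simp [t], by simp [s], fun n => ?_, fun n => ?_, fun m n hmn => ?_⟩
  · simp only [s]
    split_ifs
    exacts [hs₀, hw_pos n]
  · simp only [t, s]
    split_ifs with hn
    · simp only [abs_zero, zero_add]
      linarith
    · rw [abs_of_pos (by linarith [hw_pos n])]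
      linarith [hw_le hn]
  · rcases hmn.lt_or_gt with hlt | hgt
    · exact hsep hlt
    · rw [abs_sub_comm, add_comm]
      exact hsep hgt

lemma exists_cubeFamily_openCube [NeZero d] {K : ℝ} (hK : 1 ≤ K) (c : Ed d) {s₀ ℓ : ℝ}
    (hs₀ : 0 < s₀) (hs₀ℓ : s₀ < ℓ) :
    ∃ F : CubeFamily d K (openCube d c ℓ), F.center 0 = c ∧ F.side 0 = s₀ := by
  obtain ⟨t, s, ht0, hs0, hs, hts, hsep⟩ := exists_separated_intervals hs₀ hs₀ℓ
  let center (n : ℕ) : Ed d := c + EuclideanSpace.single 0 (t n)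
  have hcenter (n : ℕ) (i : Fin d) : center n i - c i = if i = 0 then t n else 0 := by
    simp [center, PiLp.single_apply]
  have hdisj : Pairwise (Function.onFun Disjoint fun n => cube d (center n) (s n)) :=
    fun m n hmn => disjoint_cube_of_lt_abs_sub 0 (by simpa [center] using hsep hmn)
  refine ⟨⟨center, s, hs, fun n => cube_subset_openCube fun i => ?_, fun x => ?_⟩,
    by simp [center, ht0], hs0⟩
  · rw [hcenter]
    split_ifs
    · exact hts n
    · linarith [hts n, abs_nonneg (t n)]
  · calc ∑' n, (cube d (center n) (s n)).indicator (fun _ => 1) x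
        = (⋃ n, cube d (center n) (s n)).indicator (fun _ => 1) x :=
          (congrFun (indicator_iUnion_of_pairwise_disjoint _ hdisj _) x).symm
      _ ≤ (1 : ℝ≥0∞) := indicator_apply_le' (fun _ => le_rfl) (fun _ => zero_le_one)
      _ ≤ ENNReal.ofReal K := ENNReal.one_le_ofReal.mpr hK

lemma oscTerm_le_Ofun_openCube [NeZero d] (δ : ℕ) {K C0 r ℓ : ℝ} (hK : 1 ≤ K) (hC0 : 1 < C0)
    (hℓ : 0 < ℓ) (g : Ed d → ℂ) (c : Ed d) :
    oscTerm d δ r g (cube d c ℓ) ≤ Ofun d δ K C0 r g (openCube d c ℓ) := by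
  have hC0_pos : 0 < C0 := one_pos.trans hC0
  obtain ⟨F, hc, hs⟩ := exists_cubeFamily_openCube hK c (div_pos hℓ hC0_pos) (div_lt_self hℓ hC0)
  calc oscTerm d δ r g (cube d c ℓ)
      = oscTerm d δ r g (cube d (F.center 0) (C0 * F.side 0)) := by
        rw [hc, hs, mul_div_cancel₀ _ hC0_pos.ne']
    _ ≤ ∑' n, oscTerm d δ r g (cube d (F.center n) (C0 * F.side n)) := ENNReal.le_tsum 0
    _ ≤ Ofun d δ K C0 r g (openCube d c ℓ) :=
        le_iSup (fun F : CubeFamily d K _ => ∑' n, oscTerm d δ r g (cube d (F.center n) _)) F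

end CubeFamilies

lemma layerNorm_single (q p η : ℝ) (Ω₀ : Set (Ed d)) :
    layerNorm d q p η (fun j => if j = 0 then Ω₀ else ∅) =
      eAmalgam d (q / η) (p / η) (Ω₀.indicator fun _ => 1) := by
  unfold layerNorm
  congr 1
  funext x
  rw [tsum_eq_single 0 fun j hj => by simp [hj]]
  simp

lemma Ofun_le_of_mem_ONormSet {δ : ℕ} {K C0 q p η r : ℝ} {g : Ed d → ℂ} {C : ℝ≥0∞}
    (hC : C ∈ ONormSet d δ K C0 q p η r g) {Ω₀ : Set (Ed d)} (hopen : IsOpen Ω₀)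
    (hne : Ω₀ ≠ univ) (hfin : eAmalgam d (q / η) (p / η) (Ω₀.indicator fun _ => 1) ≠ ∞) :
    Ofun d δ K C0 r g Ω₀ ≤ C * eAmalgam d (q / η) (p / η) (Ω₀.indicator fun _ => 1) ^ (1 / η) := by
  have h := hC (fun j => if j = 0 then Ω₀ else ∅)
    (fun j => by split_ifs; exacts [hopen, isOpen_empty])
    (fun j => by split_ifs; exacts [hne, empty_ne_univ]) (by rwa [layerNorm_single])
  rw [layerNorm_single] at h
  calc Ofun d δ K C0 r g Ω₀
      = (2 : ℝ≥0∞) ^ ((0 : ℤ) : ℝ) * Ofun d δ K C0 r g (if (0 : ℤ) = 0 then Ω₀ else ∅) := by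
        simp
    _ ≤ _ := ENNReal.le_tsum (f := fun j : ℤ =>
        (2 : ℝ≥0∞) ^ (j : ℝ) * Ofun d δ K C0 r g (if j = 0 then Ω₀ else ∅)) 0
    _ ≤ _ := h

lemma inv_φ1_mul_rpow_eq {q p r : ℝ} (hr : 0 < r) (c : Ed d) {ℓ : ℝ} (hℓ : 0 < ℓ)
    (hA : eAmalgam d q p ((cube d c ℓ).indicator fun _ => 1) ≠ ∞) (I : ℝ≥0∞) :
    (φ1 d q p c ℓ)⁻¹ * ((volume (cube d c ℓ))⁻¹ * I) ^ (1 / r) =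
      (eAmalgam d q p ((cube d c ℓ).indicator fun _ => 1))⁻¹ *
        (volume (cube d c ℓ) ^ (1 - 1 / r) * I ^ (1 / r)) := by
  have hQ0 := (volume_cube_pos c hℓ).ne'
  have hQ := volume_cube_ne_top c ℓ
  rw [φ1, ENNReal.mul_inv (.inr (ENNReal.inv_ne_top.mpr hQ0)) (.inl hA), inv_inv,
    ENNReal.mul_rpow_of_nonneg _ _ (by positivity), ENNReal.inv_rpow, sub_eq_add_neg,
    ENNReal.rpow_add _ _ hQ0 hQ, ENNReal.rpow_one, ENNReal.rpow_neg]
  ring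

lemma campanato_φ1_le_of_mem_ONormSet [NeZero d] (δ : ℕ) {q p η r K C0 : ℝ} (hq : 0 < q)
    (hqp : q ≤ p) (hη : 0 < η) (hr : 0 < r) (hK : 1 ≤ K) (hC0 : 1 < C0) (g : Ed d → ℂ)
    {C : ℝ≥0∞} (hC : C ∈ ONormSet d δ K C0 q p η r g) :
    campanato d δ r (φ1 d q p) g ≤ C := by
  have hp : 0 < p := hq.trans_le hqp
  refine iSup₂_le fun c ℓ => iSup_le fun hℓ => ?_
  set A := eAmalgam d q p ((cube d c ℓ).indicator fun _ => 1)
  have hQ := measurableSet_cube c ℓ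
  have hΩ₀ := (isOpen_openCube c ℓ).measurableSet
  have hA0 : A ≠ 0 := eAmalgam_indicator_ne_zero hq hp hQ (volume_cube_pos c hℓ).ne'
  have hA : A ≠ ∞ := eAmalgam_indicator_ne_top hq hqp hQ (volume_cube_ne_top c ℓ)
  have hfin : eAmalgam d (q / η) (p / η) ((openCube d c ℓ).indicator fun _ => 1) ≠ ∞ :=
    eAmalgam_indicator_ne_top (by positivity) (by gcongr) hΩ₀
      (ne_top_of_le_ne_top (volume_cube_ne_top c ℓ) (measure_mono (openCube_subset_cube c ℓ)))
  have hosc : oscTerm d δ r g (cube d c ℓ) ≤ C * A :=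
    calc oscTerm d δ r g (cube d c ℓ) ≤ Ofun d δ K C0 r g (openCube d c ℓ) :=
          oscTerm_le_Ofun_openCube δ hK hC0 hℓ g c
      _ ≤ C * eAmalgam d (q / η) (p / η) ((openCube d c ℓ).indicator fun _ => 1) ^ (1 / η) :=
          Ofun_le_of_mem_ONormSet hC (isOpen_openCube c ℓ) (openCube_ne_univ c ℓ) hfin
      _ = C * eAmalgam d q p ((openCube d c ℓ).indicator fun _ => 1) := by
          rw [eAmalgam_div_rpow_inv hq hη hΩ₀]
      _ ≤ C * A := by
          gcongr
          exact eAmalgam_indicator_mono hq hp hΩ₀ hQ (openCube_subset_cube c ℓ)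
  calc _ = A⁻¹ * oscTerm d δ r g (cube d c ℓ) := inv_φ1_mul_rpow_eq hr c hℓ hA _
    _ ≤ A⁻¹ * (C * A) := by gcongr
    _ = C := by rw [mul_comm C, ← mul_assoc, ENNReal.inv_mul_cancel hA0 hA, one_mul]

end Development

theorem stmt_8_general (d δ : ℕ) (q p η r K C0 : ℝ)
    (hq0 : 0 < q) (hqp : q ≤ p) (hη : 0 < η) (hr : 1 ≤ r)
    (hK : 1 ≤ K) (hC0 : 1 < C0)
    (g : Ed d → ℂ) :
    campanato d δ r (φ2 d q) g ≤ campanato d δ r (φ1 d q p) g ∧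
    campanato d δ r (φ1 d q p) g ≤ sInf (ONormSet d δ K C0 q p η r g) := by
  refine ⟨campanato_φ2_le_campanato_φ1 δ r hq0 hqp g, le_sInf fun C hC => ?_⟩
  have hr0 : 0 < r := one_pos.trans_le hr
  rcases eq_or_ne d 0 with rfl | hd
  · rw [campanato_of_dim_zero δ hr0]
    exact zero_le
  · have : NeZero d := ⟨hd⟩
    exact campanato_φ1_le_of_mem_ONormSet δ hq0 hqp hη hr0 hK hC0 g hC

/-- embedding `𝓛^{(q,p,η)}_{r,φ₁,δ} ↪ 𝓛_{r,φ₁,δ} ↪ 𝓛_{r,φ₂,δ}`: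
`‖g‖_{𝓛_{r,φ₂,δ}} ≤ ‖g‖_{𝓛_{r,φ₁,δ}} ≤ ‖g‖_{𝓛^{(q,p,η)}_{r,φ₁,δ}}`. -/
theorem stmt_8 (d δ : ℕ) (q p η r K C0 : ℝ)
    (hq0 : 0 < q) (hq1 : q ≤ 1) (hqp : q ≤ p) (hη : 0 < η) (hr : 1 ≤ r)
    (hK : 1 ≤ K) (hC0 : 1 < C0)
    (g : Ed d → ℂ) (hg : memLocLr d r g)
    (hmem : ∃ C ∈ ONormSet d δ K C0 q p η r g, C ≠ ∞) :
    campanato d δ r (φ2 d q) g ≤ campanato d δ r (φ1 d q p) g ∧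
    campanato d δ r (φ1 d q p) g ≤ sInf (ONormSet d δ K C0 q p η r g) :=
  stmt_8_general d δ q p η r K C0 hq0 hqp hη hr hK hC0 g

end HA
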